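/- Let D₂(x,t) = x⁶ + 3(t² + 1)x⁴ + 3(t² − 3)²x² + t⁶ + 27t⁴ + 99t² + 9 and D̂₂(x,t;α,β) = D₂(x,t) + 2αt(3x² − t² − 9) − 2βx(x² − 3t² − 3) + α² + β². Fix a real parameter α. Then at every point (ξ,η,τ) ∈ ℝ³ where D̂₂(ξ − 3τ, η; α, −48τ) > 0, the function v(ξ,η,τ) = 2·∂²/∂ξ² [ln D̂₂(ξ − 3τ, η; α, −48τ)] satisfies the Kadomtsev–Petviashvili I equation (v_τ + 6·v·v_ξ + v_ξξξ)_ξ = 3·v_ηη. -/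

import Mathlib

/-!
In the coordinates `(ξ, η, τ)`, `F = D̂₂(ξ - 3τ, η; α, -48τ)` is a polynomial satisfying Hirota's
bilinear form of KPI, `(D_ξ D_τ + D_ξ⁴ - 3 D_η²) F·F = 0`. For any polynomial `F` this identity
makes `v = 2 (log F)_ξξ` a solution of KPI wherever `F ≠ 0`: writing `B` for the left-hand side,
the KPI residual of `v` is `∂_ξ² (B / F²)`. All functions met along the way are quotients `N / Fᵏ`
with `N` a polynomial in `(ξ, η, τ)`, so their partial derivatives are computed by the quotient
rule on numerators, and the claim becomes an identity between polynomials.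
-/

/-- Partial derivative in the first variable `ξ`. -/
noncomputable def dXi (f : ℝ → ℝ → ℝ → ℝ) : ℝ → ℝ → ℝ → ℝ :=
  fun ξ η τ => deriv (fun s => f s η τ) ξ

/-- Partial derivative in the second variable `η`. -/
noncomputable def dEta (f : ℝ → ℝ → ℝ → ℝ) : ℝ → ℝ → ℝ → ℝ :=
  fun ξ η τ => deriv (fun s => f ξ s τ) η

/-- Partial derivative in the third variable `τ`. -/
noncomputable def dTau (f : ℝ → ℝ → ℝ → ℝ) : ℝ → ℝ → ℝ → ℝ :=
  fun ξ η τ => deriv (fun s => f ξ η s) τ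

/-- The KPI equation `(v_τ + 6 v v_ξ + v_ξξξ)_ξ = 3 v_ηη` at the point `(ξ,η,τ)`. -/
def KPIAt (v : ℝ → ℝ → ℝ → ℝ) (ξ η τ : ℝ) : Prop :=
  dXi (fun ξ' η' τ' => dTau v ξ' η' τ' + 6 * v ξ' η' τ' * dXi v ξ' η' τ'
      + dXi (dXi (dXi v)) ξ' η' τ') ξ η τ
    = 3 * dEta (dEta v) ξ η τ

/-- The KPI equation `(v_τ + 6 v v_ξ + v_ξξξ)_ξ = 3 v_ηη` on all of ℝ³. -/
def IsKPISolution (v : ℝ → ℝ → ℝ → ℝ) : Prop := ∀ ξ η τ : ℝ, KPIAt v ξ η τ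

/-- `D₂(x,t) = x⁶ + 3(t²+1)x⁴ + 3(t²−3)²x² + t⁶ + 27t⁴ + 99t² + 9`. -/
noncomputable def D2 (x t : ℝ) : ℝ :=
  x ^ 6 + 3 * (t ^ 2 + 1) * x ^ 4 + 3 * (t ^ 2 - 3) ^ 2 * x ^ 2
    + t ^ 6 + 27 * t ^ 4 + 99 * t ^ 2 + 9

/-- `D̂₂(x,t;α,β) = D₂(x,t) + 2αt(3x² − t² − 9) − 2βx(x² − 3t² − 3) + α² + β²`. -/
noncomputable def D2hat (x t α β : ℝ) : ℝ :=
  D2 x t + 2 * α * t * (3 * x ^ 2 - t ^ 2 - 9) - 2 * β * x * (x ^ 2 - 3 * t ^ 2 - 3)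
    + α ^ 2 + β ^ 2

open MvPolynomial Filter Topology

namespace MvPolynomial

variable {σ R : Type*}

theorem pderiv_ofNat [CommSemiring R] (i : σ) (n : ℕ) [n.AtLeastTwo] :
    pderiv i (ofNat(n) : MvPolynomial σ R) = 0 := by
  rw [← Nat.cast_ofNat]
  exact Derivation.map_natCast _ _

theorem pderiv_comm [CommRing R] (i j : σ) (p : MvPolynomial σ R) :
    pderiv i (pderiv j p) = pderiv j (pderiv i p) := by
  have h : ⁅pderiv i, pderiv j⁆ = (0 : Derivation R (MvPolynomial σ R) (MvPolynomial σ R)) :=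
    derivation_ext fun k => by
      classical
      rw [Derivation.commutator_apply, pderiv_X, pderiv_X, Pi.single_apply, Pi.single_apply]
      split_ifs <;> simp
  simpa [Derivation.commutator_apply, sub_eq_zero] using congrArg (fun D => D p) h

theorem hasDerivAt_eval_update [DecidableEq σ] (p : MvPolynomial σ ℝ) (x : σ → ℝ) (i : σ) :
    HasDerivAt (fun s => eval (Function.update x i s) p) (eval x (pderiv i p)) (x i) := by
  induction p using MvPolynomial.induction_on with
  | C a => simpa using hasDerivAt_const (x i) a
  | add p q hp hq => simpa using hp.fun_add hq
  | mul_X p n hp =>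
    have hX : HasDerivAt (fun s => eval (Function.update x i s) (X n))
        (eval x (pderiv i (X n))) (x i) := by
      rcases eq_or_ne n i with rfl | hn
      · simpa using hasDerivAt_id' (x n)
      · simpa [hn, pderiv_X_of_ne hn] using hasDerivAt_const (x i) (x n)
    have h := hp.fun_mul hX
    simp only [← map_mul, Function.update_eq_self] at h
    refine h.congr_deriv ?_
    rw [pderiv_mul, map_add, map_mul, map_mul, add_comm]

end MvPolynomial

theorem HasDerivAt.div_pow {f g : ℝ → ℝ} {f' g' x : ℝ} (hf : HasDerivAt f f' x)
    (hg : HasDerivAt g g' x) (hx : g x ≠ 0) (k : ℕ) :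
    HasDerivAt (fun s => f s / g s ^ k) ((g x * f' - k * f x * g') / g x ^ (k + 1)) x := by
  refine (hf.div (hg.fun_pow k) (pow_ne_zero k hx)).congr_deriv ?_
  rcases k with _ | k
  · simp [hx]
  · field_simp
    push_cast
    ring

theorem deriv_eq_of_eq_div_pow {σ : Type*} [DecidableEq σ] {P N : MvPolynomial σ ℝ} {k : ℕ}
    {x : σ → ℝ} {i : σ} {h : ℝ → ℝ}
    (hh : ∀ s, eval (Function.update x i s) P ≠ 0 →
      h s = eval (Function.update x i s) N / eval (Function.update x i s) P ^ k)
    (hP : eval x P ≠ 0) :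
    deriv h (x i) = eval x (P * pderiv i N - k * N * pderiv i P) / eval x P ^ (k + 1) := by
  have hPd := hasDerivAt_eval_update P x i
  have hNd := hasDerivAt_eval_update N x i
  have hPi : eval (Function.update x i (x i)) P ≠ 0 := by rwa [Function.update_eq_self]
  have hev : h =ᶠ[𝓝 (x i)]
      fun s => eval (Function.update x i s) N / eval (Function.update x i s) P ^ k :=
    (hPd.continuousAt.eventually_ne hPi).mono hh
  rw [hev.deriv_eq, (hNd.div_pow hPd hPi k).deriv]
  simp only [Function.update_eq_self, map_sub, map_mul, map_natCast]

theorem update_vec3_zero (ξ η τ s : ℝ) : Function.update ![ξ, η, τ] 0 s = ![s, η, τ] := by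
  ext i; fin_cases i <;> rfl

theorem update_vec3_one (ξ η τ s : ℝ) : Function.update ![ξ, η, τ] 1 s = ![ξ, s, τ] := by
  ext i; fin_cases i <;> rfl

theorem update_vec3_two (ξ η τ s : ℝ) : Function.update ![ξ, η, τ] 2 s = ![ξ, η, s] := by
  ext i; fin_cases i <;> rfl

def IsDivPow (P N : MvPolynomial (Fin 3) ℝ) (k : ℕ) (g : ℝ → ℝ → ℝ → ℝ) : Prop :=
  ∀ ξ η τ, eval ![ξ, η, τ] P ≠ 0 → g ξ η τ = eval ![ξ, η, τ] N / eval ![ξ, η, τ] P ^ k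

namespace IsDivPow

variable {P N M : MvPolynomial (Fin 3) ℝ} {k l : ℕ} {g h : ℝ → ℝ → ℝ → ℝ}

theorem dXi (hg : IsDivPow P N k g) :
    IsDivPow P (P * pderiv 0 N - k * N * pderiv 0 P) (k + 1) (_root_.dXi g) := fun ξ η τ hP =>
  deriv_eq_of_eq_div_pow (x := ![ξ, η, τ]) (i := 0) (h := fun s => g s η τ)
    (fun s => by simpa only [update_vec3_zero] using hg s η τ) hP

theorem dEta (hg : IsDivPow P N k g) :
    IsDivPow P (P * pderiv 1 N - k * N * pderiv 1 P) (k + 1) (_root_.dEta g) := fun ξ η τ hP =>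
  deriv_eq_of_eq_div_pow (x := ![ξ, η, τ]) (i := 1) (h := fun s => g ξ s τ)
    (fun s => by simpa only [update_vec3_one] using hg ξ s τ) hP

theorem dTau (hg : IsDivPow P N k g) :
    IsDivPow P (P * pderiv 2 N - k * N * pderiv 2 P) (k + 1) (_root_.dTau g) := fun ξ η τ hP =>
  deriv_eq_of_eq_div_pow (x := ![ξ, η, τ]) (i := 2) (h := fun s => g ξ η s)
    (fun s => by simpa only [update_vec3_two] using hg ξ η s) hP

theorem add (hg : IsDivPow P N k g) (hh : IsDivPow P M k h) :
    IsDivPow P (N + M) k fun ξ η τ => g ξ η τ + h ξ η τ := fun ξ η τ hP => by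
  dsimp only
  rw [hg ξ η τ hP, hh ξ η τ hP, map_add, add_div]

theorem mul (hg : IsDivPow P N k g) (hh : IsDivPow P M l h) :
    IsDivPow P (N * M) (k + l) fun ξ η τ => g ξ η τ * h ξ η τ := fun ξ η τ hP => by
  dsimp only
  rw [hg ξ η τ hP, hh ξ η τ hP, map_mul, pow_add, div_mul_div_comm]

theorem const_mul (c : ℝ) (hg : IsDivPow P N k g) :
    IsDivPow P (C c * N) k fun ξ η τ => c * g ξ η τ := fun ξ η τ hP => by
  dsimp only
  rw [hg ξ η τ hP, map_mul, eval_C, mul_div_assoc]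

theorem mul_pow (m : ℕ) (hg : IsDivPow P N k g) : IsDivPow P (N * P ^ m) (k + m) g :=
  fun ξ η τ hP => by
    rw [hg ξ η τ hP, map_mul, map_pow, pow_add, mul_div_mul_right _ _ (pow_ne_zero m hP)]

theorem apply_eq_of_numerator_eq (m : ℕ) (hg : IsDivPow P N (k + m) g) (hh : IsDivPow P M k h)
    (hNM : N = M * P ^ m) {ξ η τ : ℝ} (hP : eval ![ξ, η, τ] P ≠ 0) : g ξ η τ = h ξ η τ := by
  rw [hg ξ η τ hP, (hh.mul_pow m) ξ η τ hP, hNM]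

end IsDivPow

theorem isDivPow_dXi_log (P : MvPolynomial (Fin 3) ℝ) :
    IsDivPow P (pderiv 0 P) 1 (dXi fun ξ η τ => Real.log (eval ![ξ, η, τ] P)) :=
  fun ξ η τ hP => by
    have h := (hasDerivAt_eval_update P ![ξ, η, τ] 0).log (by rwa [Function.update_eq_self])
    simp only [update_vec3_zero] at h
    rw [pow_one]
    exact h.deriv

/-- `½ (D_ξ D_τ + D_ξ⁴ - 3 D_η²) F·F` in Hirota's bilinear derivatives. -/
noncomputable def hirotaKP (F : MvPolynomial (Fin 3) ℝ) : MvPolynomial (Fin 3) ℝ :=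
  F * pderiv 2 (pderiv 0 F) - pderiv 0 F * pderiv 2 F
    + F * pderiv 0 (pderiv 0 (pderiv 0 (pderiv 0 F)))
    - 4 * pderiv 0 F * pderiv 0 (pderiv 0 (pderiv 0 F)) + 3 * pderiv 0 (pderiv 0 F) ^ 2
    - 3 * (F * pderiv 1 (pderiv 1 F) - pderiv 1 F ^ 2)

theorem kpiAt_of_hirotaKP_eq_zero {F : MvPolynomial (Fin 3) ℝ} (hF : hirotaKP F = 0)
    {ξ η τ : ℝ} (h : eval ![ξ, η, τ] F ≠ 0) :
    KPIAt (fun ξ' η' τ' => 2 * dXi (dXi fun ξ'' η'' τ'' =>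
      Real.log (eval ![ξ'', η'', τ''] F)) ξ' η' τ') ξ η τ := by
  have hv := (isDivPow_dXi_log F).dXi.const_mul 2
  have hlhs := (((hv.dTau.mul_pow 2).add ((hv.const_mul 6).mul hv.dXi)).add hv.dXi.dXi.dXi).dXi
  have hrhs := hv.dEta.dEta.const_mul 3
  refine hlhs.apply_eq_of_numerator_eq 2 hrhs ?_ h
  have h1 : pderiv 0 (hirotaKP F) = 0 := by rw [hF, map_zero]
  have h2 : pderiv 0 (pderiv 0 (hirotaKP F)) = 0 := by rw [h1, map_zero]
  simp only [hirotaKP, pderiv_mul, pderiv_pow, pderiv_ofNat, pderiv_one, map_add, map_sub, map_zero,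
    map_ofNat, pderiv_comm (0 : Fin 3) 1, pderiv_comm (0 : Fin 3) 2, Nat.cast_add, Nat.cast_ofNat,
    Nat.cast_one, Nat.add_one_sub_one, zero_mul, add_zero] at hF h1 h2 ⊢
  -- the coefficients come from expanding `F⁶ · 2 ∂_ξ² (hirotaKP F / F²)`
  linear_combination (12 * F ^ 2 * pderiv 0 F ^ 2 - 4 * F ^ 3 * pderiv 0 (pderiv 0 F)) * hF
    + (-8 * F ^ 3 * pderiv 0 F) * h1 + 2 * F ^ 4 * h2

noncomputable def D2hatPoly (α : ℝ) : MvPolynomial (Fin 3) ℝ :=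
  let x : MvPolynomial (Fin 3) ℝ := X 0 - 3 * X 2
  let t : MvPolynomial (Fin 3) ℝ := X 1
  let β : MvPolynomial (Fin 3) ℝ := -48 * X 2
  x ^ 6 + 3 * (t ^ 2 + 1) * x ^ 4 + 3 * (t ^ 2 - 3) ^ 2 * x ^ 2 + t ^ 6 + 27 * t ^ 4 + 99 * t ^ 2 + 9
    + 2 * C α * t * (3 * x ^ 2 - t ^ 2 - 9) - 2 * β * x * (x ^ 2 - 3 * t ^ 2 - 3) + C α ^ 2 + β ^ 2

theorem eval_D2hatPoly (α ξ η τ : ℝ) :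
    eval ![ξ, η, τ] (D2hatPoly α) = D2hat (ξ - 3 * τ) η α (-48 * τ) := by
  simp [D2hatPoly, D2hat, D2]

theorem hirotaKP_D2hatPoly (α : ℝ) : hirotaKP (D2hatPoly α) = 0 := by
  simp only [hirotaKP, D2hatPoly, pderiv_mul, pderiv_pow, pderiv_X, Pi.single_apply, Fin.reduceEq,
    ↓reduceIte, pderiv_C, pderiv_ofNat, pderiv_one, map_add, map_sub, map_neg, mul_zero, zero_mul,
    add_zero, zero_add, sub_zero, zero_sub, mul_one, neg_zero, Nat.cast_ofNat, Nat.add_one_sub_one,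
    pow_one]
  ring

theorem kpi_from_nls_rational (α : ℝ) :
    ∀ ξ η τ : ℝ, 0 < D2hat (ξ - 3 * τ) η α (-48 * τ) →
      KPIAt (fun ξ' η' τ' =>
        2 * dXi (dXi (fun ξ'' η'' τ'' =>
          Real.log (D2hat (ξ'' - 3 * τ'') η'' α (-48 * τ'')))) ξ' η' τ') ξ η τ := by
  intro ξ η τ hpos
  have h := kpiAt_of_hirotaKP_eq_zero (hirotaKP_D2hatPoly α)
    (by rw [eval_D2hatPoly]; exact hpos.ne' : eval ![ξ, η, τ] (D2hatPoly α) ≠ 0)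
  simpa only [eval_D2hatPoly] using h
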